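/- arXiv:2305.00896 — 8 statements merged into one kernel-verified Lean document; each statement's English description precedes it below -/
import Mathlib

section
/- Let Γ act minimally by homeomorphisms on a compact space X, and let U be an adapted clopen set with stabilizer subgroup Γ_U = {g ∈ Γ | g·U ∩ U ≠ ∅}. Then the translates {g·U | g ∈ Γ} form a finite partition of X, and consequently Γ_U has finite index in Γ. -/
open Pointwise

/-!
By minimality every point lies in some translate of the open set `U`, and compactness extracts
finitely many translates `g₁ • U, …, gₙ • U` covering `X`. Adaptedness says that two translates
of `U` are equal or disjoint, so any translate, being nonempty, meets and hence equals one of the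
`gᵢ • U`. Thus the orbit of `U` is finite, and by orbit–stabilizer so is the index of its
stabilizer, which is exactly `{g | g • U ∩ U ≠ ∅}`.
-/

namespace MulAction

variable {Γ X : Type*} [Group Γ] [MulAction Γ X] {U : Set X}

theorem smul_set_eq_or_disjoint_of_adapted (hadapted : ∀ g : Γ, (g • U) ∩ U ≠ ∅ → g • U = U)
    (g g' : Γ) : g • U = g' • U ∨ Disjoint (g • U) (g' • U) := by
  refine (Set.disjoint_or_nonempty_inter (g • U) (g' • U)).symm.imp (fun hmeet => ?_) id
  have hstab : (g'⁻¹ * g) • U = U := by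
    refine hadapted _ (Set.nonempty_iff_ne_empty.mp ?_)
    simpa only [Set.smul_set_inter, smul_smul, inv_mul_cancel, one_smul] using
      hmeet.smul_set (a := g'⁻¹)
  rw [← smul_inv_smul g' (g • U), smul_smul g'⁻¹ g, hstab]

theorem mem_stabilizer_iff_smul_inter_ne_empty_of_adapted (hne : U.Nonempty)
    (hadapted : ∀ g : Γ, (g • U) ∩ U ≠ ∅ → g • U = U) (g : Γ) :
    g ∈ stabilizer Γ U ↔ (g • U) ∩ U ≠ ∅ := by
  refine ⟨fun h => ?_, hadapted g⟩
  rw [mem_stabilizer_iff.mp h, Set.inter_self]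
  exact hne.ne_empty

theorem finite_orbit_of_finite_cover_of_adapted (hne : U.Nonempty)
    (hadapted : ∀ g : Γ, (g • U) ∩ U ≠ ∅ → g • U = U) {I : Finset Γ}
    (hI : Set.univ ⊆ ⋃ g ∈ I, g • U) : (orbit Γ U).Finite := by
  refine (I.finite_toSet.image (· • U)).subset ?_
  rintro _ ⟨g, rfl⟩
  obtain ⟨x, hx⟩ := hne.smul_set (a := g)
  obtain ⟨g', hg', hxg'⟩ := Set.mem_iUnion₂.mp (hI (Set.mem_univ x))
  exact ⟨g', hg', (smul_set_eq_or_disjoint_of_adapted hadapted g' g).resolve_right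
    fun hdisj => hdisj.ne_of_mem hxg' hx rfl⟩

theorem finiteIndex_stabilizer_of_finite_orbit {x : X} (h : (orbit Γ x).Finite) :
    (stabilizer Γ x).FiniteIndex :=
  have : Finite (orbit Γ x) := h
  have : Finite (Γ ⧸ stabilizer Γ x) := .of_equiv _ (orbitEquivQuotientStabilizer Γ x)
  Subgroup.finiteIndex_of_finite_quotient

end MulAction

theorem adapted_set_translates_finite_partition_general
    {Γ X : Type*} [Group Γ] [MetricSpace X] [CompactSpace X]
    [MulAction Γ X] (hcont : ∀ g : Γ, Continuous fun x : X => g • x)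
    (hmin : ∀ x : X, Dense (MulAction.orbit Γ x))
    (U : Set X) (hne : U.Nonempty) (hclopen : IsClopen U)
    (hadapted : ∀ g : Γ, (g • U) ∩ U ≠ ∅ → g • U = U) :
    ∃ H : Subgroup Γ, (∀ g : Γ, g ∈ H ↔ (g • U) ∩ U ≠ ∅) ∧ H.FiniteIndex ∧
      {V : Set X | ∃ g : Γ, V = g • U}.Finite ∧
      (∀ x : X, ∃ g : Γ, x ∈ g • U) ∧
      (∀ g g' : Γ, g • U = g' • U ∨ Disjoint (g • U) (g' • U)) := by
  have : ContinuousConstSMul Γ X := ⟨hcont⟩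
  have : MulAction.IsMinimal Γ X := ⟨hmin⟩
  obtain ⟨I, hI⟩ := isCompact_univ.exists_finite_cover_smul Γ hclopen.isOpen hne
  have hfin : (MulAction.orbit Γ U).Finite :=
    MulAction.finite_orbit_of_finite_cover_of_adapted hne hadapted hI
  have htranslates : {V : Set X | ∃ g : Γ, V = g • U} = MulAction.orbit Γ U := by
    ext V
    simp only [Set.mem_ofPred_eq, MulAction.mem_orbit_iff, eq_comm]
  refine ⟨MulAction.stabilizer Γ U,
    MulAction.mem_stabilizer_iff_smul_inter_ne_empty_of_adapted hne hadapted,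
    MulAction.finiteIndex_stabilizer_of_finite_orbit hfin, htranslates ▸ hfin,
    fun x => Set.mem_iUnion.mp ((hclopen.isOpen.iUnion_smul Γ hne).symm ▸ Set.mem_univ x),
    MulAction.smul_set_eq_or_disjoint_of_adapted hadapted⟩

/-- For a minimal equicontinuous action on a compact metric space, the translates of an
adapted clopen set `U` form a finite partition of `X`, and the stabilizer subgroup
`Γ_U = {g | g • U ∩ U ≠ ∅}` has finite index. -/
theorem adapted_set_translates_finite_partition
    {Γ X : Type*} [Group Γ] [MetricSpace X] [CompactSpace X]
    [TopologicalSpace.MetrizableSpace X] [TotallyDisconnectedSpace X] [PerfectSpace X]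
    [MulAction Γ X] (hcont : ∀ g : Γ, Continuous fun x : X => g • x)
    (hmin : ∀ x : X, Dense (MulAction.orbit Γ x))
    (hequi : ∀ ε > (0:ℝ), ∃ δ > (0:ℝ), ∀ (x y : X) (g : Γ),
      dist x y < δ → dist (g • x) (g • y) < ε)
    (U : Set X) (hne : U.Nonempty) (hclopen : IsClopen U)
    (hadapted : ∀ g : Γ, (g • U) ∩ U ≠ ∅ → g • U = U) :
    ∃ H : Subgroup Γ, (∀ g : Γ, g ∈ H ↔ (g • U) ∩ U ≠ ∅) ∧ H.FiniteIndex ∧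
      {V : Set X | ∃ g : Γ, V = g • U}.Finite ∧
      (∀ x : X, ∃ g : Γ, x ∈ g • U) ∧
      (∀ g g' : Γ, g • U = g' • U ∨ Disjoint (g • U) (g' • U)) :=
  adapted_set_translates_finite_partition_general hcont hmin U hne hclopen hadapted
end

section
/- A minimal action of a group Γ by homeomorphisms on a Cantor space X is equicontinuous if and only if for every clopen subset U of X, the orbit {g·U | g ∈ Γ} of U under the induced action on clopen sets is finite. -/
open Pointwise

private lemma clopen_uniform_sep {X : Type*} [MetricSpace X] [CompactSpace X]
    {A : Set X} (hA : IsClopen A) :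
    ∃ ε > (0:ℝ), ∀ x y : X, dist x y < ε → (x ∈ A ↔ y ∈ A) := by
  classical
  set f : X → ℝ := A.piecewise (fun _ => (1:ℝ)) (fun _ => 0) with hf
  have hfc : Continuous f := by
    apply Continuous.piecewise _ continuous_const continuous_const
    simp [hA.frontier_eq]
  obtain ⟨δ, hδ, h⟩ := Metric.uniformContinuous_iff.mp
    (CompactSpace.uniformContinuous_of_continuous hfc) 1 one_pos
  refine ⟨δ, hδ, fun x y hxy => ?_⟩
  have hd := h hxy
  constructor
  · intro hx
    by_contra hy
    rw [hf] at hd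
    simp [Set.piecewise_eq_of_mem _ _ _ hx, Set.piecewise_eq_of_notMem _ _ _ hy,
      Real.dist_eq] at hd
  · intro hy
    by_contra hx
    rw [hf] at hd
    simp [Set.piecewise_eq_of_mem _ _ _ hy, Set.piecewise_eq_of_notMem _ _ _ hx,
      Real.dist_eq] at hd

private lemma delta_of_finset_clopen {X : Type*} [MetricSpace X] [CompactSpace X]
    (F : Finset (Set X)) :
    (∀ S ∈ F, IsClopen S) →
    ∃ δ > (0:ℝ), ∀ x y : X, dist x y < δ → ∀ S ∈ F, (x ∈ S ↔ y ∈ S) := by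
  classical
  induction F using Finset.induction_on with
  | empty => exact fun _ => ⟨1, one_pos, by simp⟩
  | @insert A F hA ih =>
    intro hcl
    obtain ⟨δ₁, hδ₁, h₁⟩ := ih (fun S hS => hcl S (Finset.mem_insert_of_mem hS))
    obtain ⟨δ₂, hδ₂, h₂⟩ := clopen_uniform_sep (hcl A (Finset.mem_insert_self _ _))
    refine ⟨min δ₁ δ₂, lt_min hδ₁ hδ₂, fun x y hxy S hS => ?_⟩
    rcases Finset.mem_insert.mp hS with rfl | hS
    · exact h₂ x y (hxy.trans_le (min_le_right _ _))
    · exact h₁ x y (hxy.trans_le (min_le_left _ _)) S hS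

/-- A minimal action of a group `Γ` by homeomorphisms on a Cantor space `X` is equicontinuous
iff the orbit of every clopen set under the induced action on clopen sets is finite. -/
theorem equicontinuous_iff_clopen_orbits_finite
    {Γ X : Type*} [Group Γ] [Countable Γ] [MetricSpace X] [CompactSpace X]
    [TotallyDisconnectedSpace X] [PerfectSpace X]
    [MulAction Γ X] (hcont : ∀ g : Γ, Continuous fun x : X => g • x)
    (hmin : ∀ x : X, Dense (MulAction.orbit Γ x)) :
    (∀ ε > (0:ℝ), ∃ δ > (0:ℝ), ∀ (x y : X) (g : Γ),
      dist x y < δ → dist (g • x) (g • y) < ε) ↔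
    (∀ U : Set X, IsClopen U → {V : Set X | ∃ g : Γ, V = g • U}.Finite) := by
  haveI : ContinuousConstSMul Γ X := ⟨hcont⟩
  constructor
  · -- equicontinuous → finite orbits
    intro hequi U hU
    obtain ⟨ε, hε, hεU⟩ := clopen_uniform_sep hU
    obtain ⟨δ, hδ, hδε⟩ := hequi ε hε
    obtain ⟨t, -, htf, htcover⟩ := finite_cover_balls_of_compact (isCompact_univ (X := X)) hδ
    haveI := htf.to_subtype
    set S : Set (Set X) := {V : Set X | ∃ g : Γ, V = g • U} with hS
    -- key: if two translates have the same trace on t, they are equal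
    have key : ∀ g h : Γ, (∀ x ∈ t, x ∈ g • U ↔ x ∈ h • U) → g • U ⊆ h • U := by
      intro g h htrace y hy
      obtain ⟨x, hxt, hyx⟩ : ∃ x ∈ t, y ∈ Metric.ball x δ := by
        have := htcover (Set.mem_univ y)
        simpa using this
      have hdist : dist y x < δ := Metric.mem_ball.mp hyx
      have hg : g⁻¹ • y ∈ U := Set.mem_smul_set_iff_inv_smul_mem.mp hy
      have hgx : g⁻¹ • x ∈ U :=
        (hεU (g⁻¹ • y) (g⁻¹ • x) (hδε y x g⁻¹ hdist)).mp hg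
      have hx : x ∈ g • U := Set.mem_smul_set_iff_inv_smul_mem.mpr hgx
      have hx' : x ∈ h • U := (htrace x hxt).mp hx
      have hhx : h⁻¹ • x ∈ U := Set.mem_smul_set_iff_inv_smul_mem.mp hx'
      have hhy : h⁻¹ • y ∈ U :=
        (hεU (h⁻¹ • y) (h⁻¹ • x) (hδε y x h⁻¹ hdist)).mpr hhx
      exact Set.mem_smul_set_iff_inv_smul_mem.mpr hhy
    -- injection into subsets of the finite net
    have hinj : Function.Injective (fun V : S => {x : t | (x : X) ∈ (V : Set X)}) := by
      rintro ⟨V, g, rfl⟩ ⟨W, h, rfl⟩ hVW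
      have htrace : ∀ x ∈ t, x ∈ g • U ↔ x ∈ h • U := by
        intro x hxt
        have := Set.ext_iff.mp hVW ⟨x, hxt⟩
        simpa using this
      have htrace' : ∀ x ∈ t, x ∈ h • U ↔ x ∈ g • U := fun x hx => (htrace x hx).symm
      exact Subtype.ext (le_antisymm (key g h htrace) (key h g htrace'))
    exact Set.finite_coe_iff.mp (Finite.of_injective _ hinj)
  · -- finite orbits → equicontinuous
    intro hfin ε hε
    -- cover X by clopen sets of diameter < ε
    have hV : ∀ x : X, ∃ V : Set X, IsClopen V ∧ x ∈ V ∧ V ⊆ Metric.ball x (ε/2) := by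
      intro x
      obtain ⟨V, hVc, hxV, hVsub⟩ :=
        compact_exists_isClopen_in_isOpen Metric.isOpen_ball
          (Metric.mem_ball_self (by positivity) : x ∈ Metric.ball x (ε/2))
      exact ⟨V, hVc, hxV, hVsub⟩
    choose V hVclopen hxV hVsub using hV
    obtain ⟨t, htcover⟩ := (isCompact_univ (X := X)).elim_nhds_subcover V
      (fun x _ => (hVclopen x).2.mem_nhds (hxV x))
    -- the family of all translates of the cover elements
    set F : Set (Set X) := ⋃ x ∈ t, {S : Set X | ∃ g : Γ, S = g • V x} with hF
    have hFfin : F.Finite :=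
      Set.Finite.biUnion t.finite_toSet (fun x _ => hfin (V x) (hVclopen x))
    have hFmem : ∀ S, S ∈ F ↔ ∃ x ∈ t, ∃ g : Γ, S = g • V x := by
      intro S; simp [hF]
    have hFclopen : ∀ S ∈ F, IsClopen S := by
      intro S hS
      obtain ⟨x, hx, g, rfl⟩ := (hFmem S).mp hS
      exact ⟨(hVclopen x).1.smul g, (hVclopen x).2.smul g⟩
    have hFinv : ∀ (g : Γ), ∀ S ∈ F, g • S ∈ F := by
      intro g S hS
      obtain ⟨x, hx, h, rfl⟩ := (hFmem S).mp hS
      exact (hFmem _).mpr ⟨x, hx, g * h, smul_smul g h (V x)⟩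
    obtain ⟨δ, hδ, hδF⟩ := delta_of_finset_clopen hFfin.toFinset
      (fun S hS => hFclopen S (hFfin.mem_toFinset.mp hS))
    refine ⟨δ, hδ, fun x y g hxy => ?_⟩
    have hmemF : ∀ S ∈ F, (g • x ∈ S ↔ g • y ∈ S) := by
      intro S hS
      have hS' : g⁻¹ • S ∈ F := hFinv g⁻¹ S hS
      have := hδF x y hxy (g⁻¹ • S) (hFfin.mem_toFinset.mpr hS')
      rw [Set.mem_inv_smul_set_iff, Set.mem_inv_smul_set_iff] at this
      exact this
    -- find a cover element containing g • x
    obtain ⟨c, hct, hc⟩ : ∃ c ∈ t, g • x ∈ V c := by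
      have := htcover.2 (Set.mem_univ (g • x))
      simpa using this
    have hVcF : V c ∈ F := (hFmem _).mpr ⟨c, hct, 1, (one_smul Γ (V c)).symm⟩
    have hcy : g • y ∈ V c := (hmemF (V c) hVcF).mp hc
    have h1 : dist (g • x) c < ε/2 := Metric.mem_ball.mp (hVsub c hc)
    have h2 : dist (g • y) c < ε/2 := Metric.mem_ball.mp (hVsub c hcy)
    calc dist (g • x) (g • y) ≤ dist (g • x) c + dist c (g • y) := dist_triangle _ _ _
    _ < ε/2 + ε/2 := by rw [dist_comm c]; exact add_lt_add h1 h2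
    _ = ε := by ring
end

section
/- If V ⊊ U are adapted clopen sets for a group action on a Cantor space with V a proper subset of U, then the stabilizer Γ_V is a proper subgroup of Γ_U, where Γ_W = {g ∈ Γ | g·W ∩ W ≠ ∅} for an adapted set W. -/
open Pointwise

/-- If `V ⊊ U` are adapted clopen sets for a minimal equicontinuous Cantor action, then the
stabilizer `Γ_V = {g | g • V ∩ V ≠ ∅}` is a proper subset of `Γ_U = {g | g • U ∩ U ≠ ∅}`. -/
theorem stabilizer_proper_of_ssubset_adapted
    {Γ X : Type*} [Group Γ] [MetricSpace X] [CompactSpace X]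
    [TotallyDisconnectedSpace X] [PerfectSpace X]
    [MulAction Γ X] (hcont : ∀ g : Γ, Continuous fun x : X => g • x)
    (hmin : ∀ x : X, Dense (MulAction.orbit Γ x))
    (hequi : ∀ ε > (0:ℝ), ∃ δ > (0:ℝ), ∀ (x y : X) (g : Γ),
      dist x y < δ → dist (g • x) (g • y) < ε)
    (U V : Set X) (hVne : V.Nonempty) (hUclopen : IsClopen U) (hVclopen : IsClopen V)
    (hUadapted : ∀ g : Γ, (g • U) ∩ U ≠ ∅ → g • U = U)
    (hVadapted : ∀ g : Γ, (g • V) ∩ V ≠ ∅ → g • V = V)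
    (hVU : V ⊂ U) :
    {g : Γ | (g • V) ∩ V ≠ ∅} ⊂ {g : Γ | (g • U) ∩ U ≠ ∅} := by
  obtain ⟨v, hv⟩ := hVne
  have hvU : v ∈ U := hVU.1 hv
  constructor
  · intro g hg
    have h := hVadapted g hg
    have hne : (g • U ∩ U).Nonempty := ⟨v, by
      constructor
      · rw [← h] at hv
        exact Set.smul_set_mono hVU.1 hv
      · exact hvU⟩
    exact fun he => (he ▸ hne).ne_empty rfl
  · -- find g with g • v ∈ U \ V
    have hopen : IsOpen (U \ V) := hUclopen.2.sdiff hVclopen.1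
    have hne : (U \ V).Nonempty := Set.nonempty_of_ssubset hVU
    obtain ⟨y, ⟨g, hgy⟩, hy⟩ := (hmin v).exists_mem_open hopen hne
    simp only [] at hgy
    subst hgy
    refine fun hsub => ?_
    have hgU : g ∈ {g : Γ | (g • U) ∩ U ≠ ∅} := by
      refine Set.nonempty_iff_ne_empty.mp ⟨g • v, ⟨v, hvU, rfl⟩, ?_⟩
      exact hy.1
    have hgV := hsub hgU
    have h := hVadapted g hgV
    have : g • v ∈ V := h ▸ ⟨v, hv, rfl⟩
    
    exact hy.2 this
end

section
/- An effective minimal equicontinuous action of a countable group Γ on a Cantor space X is topologically free if and only if it is quasi-analytic, i.e., for all g₁, g₂ ∈ Γ and every non-empty open V ⊆ X, if g₁ and g₂ agree on V then g₁ = g₂ as homeomorphisms of X. -/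
/-- An effective minimal equicontinuous action of a countable group on a Cantor space is
topologically free iff it is quasi-analytic. -/
theorem topFree_iff_quasiAnalytic
    {Γ X : Type*} [Group Γ] [Countable Γ] [MetricSpace X] [CompactSpace X]
    [TotallyDisconnectedSpace X] [PerfectSpace X]
    [MulAction Γ X] (hcont : ∀ g : Γ, Continuous fun x : X => g • x)
    (heff : ∀ g : Γ, (∀ x : X, g • x = x) → g = 1)
    (hmin : ∀ x : X, Dense (MulAction.orbit Γ x))
    (hequi : ∀ ε > (0:ℝ), ∃ δ > (0:ℝ), ∀ (x y : X) (g : Γ),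
      dist x y < δ → dist (g • x) (g • y) < ε) :
    (∀ g : Γ, g ≠ 1 → interior {x : X | g • x = x} = ∅) ↔
    (∀ g₁ g₂ : Γ, ∀ V : Set X, IsOpen V → V.Nonempty →
      (∀ x ∈ V, g₁ • x = g₂ • x) → ∀ x : X, g₁ • x = g₂ • x) := by
  constructor
  · intro htf g₁ g₂ V hV hVne hagree x
    have hfix : ∀ y ∈ V, (g₂⁻¹ * g₁) • y = y := by
      intro y hy
      rw [mul_smul, hagree y hy, inv_smul_smul]
    have hg : g₂⁻¹ * g₁ = 1 := by
      by_contra hne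
      have h1 : V ⊆ interior {z : X | (g₂⁻¹ * g₁) • z = z} :=
        interior_maximal (fun z hz => hfix z hz) hV
      obtain ⟨y, hy⟩ := hVne
      have := h1 hy
      rw [htf _ hne] at this
      exact this
    have : g₁ = g₂ := by
      have h := mul_eq_one_iff_eq_inv.mp hg
      exact inv_injective h.symm
    rw [this]
  · intro hqa g hg
    by_contra hne
    rw [← Set.not_nonempty_iff_eq_empty] at hne
    push_neg at hne
    have := hqa g 1 (interior {x : X | g • x = x}) isOpen_interior hne
      (fun x hx => by
        have : x ∈ {x : X | g • x = x} := interior_subset hx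
        simpa using this)
    exact hg (heff g (fun x => by simpa using this x))
end

section
/- Let Γ be a Noetherian group (every increasing chain of subgroups has a maximal element). Then every minimal equicontinuous action of Γ on a Cantor space X is locally quasi-analytic: there exists ε > 0 such that for any open U ⊆ X with diameter less than ε, any non-empty open V ⊆ U, and any g₁, g₂ ∈ Γ, if the actions of g₁ and g₂ agree on V then they agree on U. -/
/-- A minimal equicontinuous Cantor action of a Noetherian group is locally
quasi-analytic. -/
theorem noetherian_group_action_locally_quasiAnalytic
    {Γ X : Type*} [Group Γ] [Countable Γ] [MetricSpace X] [CompactSpace X]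
    [TotallyDisconnectedSpace X] [PerfectSpace X]
    [MulAction Γ X] (hcont : ∀ g : Γ, Continuous fun x : X => g • x)
    (hNoeth : ∀ f : ℕ → Subgroup Γ, Monotone f → ∃ n : ℕ, ∀ m : ℕ, f m ≤ f n)
    (hmin : ∀ x : X, Dense (MulAction.orbit Γ x))
    (hequi : ∀ ε > (0:ℝ), ∃ δ > (0:ℝ), ∀ (x y : X) (g : Γ),
      dist x y < δ → dist (g • x) (g • y) < ε) :
    ∃ ε > (0:ℝ), ∀ U : Set X, IsOpen U → Metric.diam U < ε →
      ∀ V : Set X, V ⊆ U → IsOpen V → V.Nonempty →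
        ∀ g₁ g₂ : Γ, (∀ x ∈ V, g₁ • x = g₂ • x) → ∀ x ∈ U, g₁ • x = g₂ • x := by
  by_contra hcon
  push_neg at hcon
  -- From failure at scale 1, X is nonempty.
  obtain ⟨_, _, _, _, _, _, ⟨x₁, _⟩, _⟩ := hcon 1 one_pos
  -- Step: any nonempty open V contains a nonempty open W and an element h
  -- fixing W pointwise but moving some point of V.
  have step : ∀ V : Set X, IsOpen V → V.Nonempty →
      ∃ W : Set X, W ⊆ V ∧ IsOpen W ∧ W.Nonempty ∧
        ∃ h : Γ, (∀ x ∈ W, h • x = x) ∧ ∃ x ∈ V, h • x ≠ x := by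
    rintro V hVopen ⟨x₀, hx₀⟩
    obtain ⟨ρ, hρpos, hball⟩ := Metric.isOpen_iff.mp hVopen x₀ hx₀
    obtain ⟨δ, hδpos, hδ⟩ := hequi (ρ/3) (by positivity)
    obtain ⟨U, hUopen, hUdiam, V', hV'U, hV'open, ⟨v, hv⟩, g₁, g₂, hagree, x, hxU, hxne⟩ :=
      hcon δ hδpos
    set h := g₂⁻¹ * g₁ with hh
    have hfix : ∀ y ∈ V', h • y = y := by
      intro y hy
      rw [hh, mul_smul, hagree y hy, inv_smul_smul]
    have hmove : h • x ≠ x := by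
      intro e
      apply hxne
      rw [hh, mul_smul] at e
      exact MulAction.injective g₂⁻¹
        (by rw [e, inv_smul_smul] : g₂⁻¹ • (g₁ • x) = g₂⁻¹ • (g₂ • x))
    -- transport into the ball around x₀ using minimality
    obtain ⟨y, hyorb, hyball⟩ := (hmin v).exists_mem_open
      (Metric.isOpen_ball : IsOpen (Metric.ball x₀ (ρ/3)))
      ⟨x₀, Metric.mem_ball_self (by positivity)⟩
    obtain ⟨g, hg⟩ := MulAction.mem_orbit_iff.mp hyorb
    have hgv : dist (g • v) x₀ < ρ/3 := by rw [hg]; exact hyball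
    have hUb : ∀ y ∈ U, g • y ∈ V := by
      intro y hy
      apply hball
      have h1 : dist y v ≤ Metric.diam U :=
        Metric.dist_le_diam_of_mem (isCompact_univ.isBounded.subset (Set.subset_univ U))
          hy (hV'U hv)
      have h2 : dist (g • y) (g • v) < ρ/3 := hδ y v g (lt_of_le_of_lt h1 hUdiam)
      have h3 : dist (g • y) x₀ ≤ dist (g • y) (g • v) + dist (g • v) x₀ := dist_triangle _ _ _
      have : dist (g • y) x₀ < ρ := by linarith
      exact Metric.mem_ball.mpr this
    refine ⟨(fun z : X => g⁻¹ • z) ⁻¹' V', ?_, hV'open.preimage (hcont g⁻¹),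
      ⟨g • v, by simpa using hv⟩, g * h * g⁻¹, ?_, g • x, hUb x hxU, ?_⟩
    · intro z hz
      have : g • (g⁻¹ • z) ∈ V := hUb _ (hV'U hz)
      simpa using this
    · intro z hz
      have hz' : h • (g⁻¹ • z) = g⁻¹ • z := hfix _ hz
      calc (g * h * g⁻¹) • z = g • (h • (g⁻¹ • z)) := by rw [mul_smul, mul_smul]
        _ = g • (g⁻¹ • z) := by rw [hz']
        _ = z := smul_inv_smul _ _
    · intro e
      apply hmove
      have e' : g • (h • x) = g • x := by
        have : (g * h * g⁻¹) • (g • x) = g • (h • x) := by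
          rw [mul_smul, mul_smul, inv_smul_smul]
        rw [this] at e
        exact e
      exact MulAction.injective g e'
  -- bundle the step into a choice function on nonempty open sets
  have step' : ∀ V : {S : Set X // IsOpen S ∧ S.Nonempty},
      ∃ W : {S : Set X // IsOpen S ∧ S.Nonempty}, W.1 ⊆ V.1 ∧
        ∃ h : Γ, (∀ x ∈ W.1, h • x = x) ∧ ∃ x ∈ V.1, h • x ≠ x := by
    rintro ⟨V, hVo, hVne⟩
    obtain ⟨W, h1, h2, h3, h4⟩ := step V hVo hVne
    exact ⟨⟨W, h2, h3⟩, h1, h4⟩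
  choose F hFsub hF using step'
  -- the decreasing sequence of nonempty open sets
  let seq : ℕ → {S : Set X // IsOpen S ∧ S.Nonempty} := fun n =>
    Nat.rec ⟨Set.univ, isOpen_univ, ⟨x₁, trivial⟩⟩ (fun _ p => F p) n
  have hseq : ∀ n, seq (n + 1) = F (seq n) := fun n => rfl
  -- the increasing sequence of pointwise stabilizers
  let H : ℕ → Subgroup Γ := fun n =>
    { carrier := {g : Γ | ∀ x ∈ (seq n).1, g • x = x}
      one_mem' := fun x _ => one_smul _ _
      mul_mem' := fun {a b} ha hb x hx => by rw [mul_smul, hb x hx, ha x hx]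
      inv_mem' := fun {a} ha x hx => by
        rw [inv_smul_eq_iff]; exact (ha x hx).symm }
  have hmono : Monotone H := by
    apply monotone_nat_of_le_succ
    intro n g hg x hx
    exact hg x (hFsub (seq n) (by rw [hseq n] at hx; exact hx))
  obtain ⟨N, hN⟩ := hNoeth H hmono
  obtain ⟨h, hfixW, x, hxV, hxmove⟩ := hF (seq N)
  have hmem : h ∈ H (N + 1) := by
    intro z hz
    exact hfixW z (by rw [hseq N] at hz; exact hz)
  exact hxmove (hN (N + 1) hmem x hxV)
end

section
/- A topologically finitely generated abelian pro-p group is topologically Noetherian: every ascending chain of closed subgroups has a maximal element. -/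
/-!
An element `g` of a pro-`p` group can be raised to `p`-adic powers: `g ^ z` is the limit of `g ^ n`
over integers `n` that are `p`-adically close to `z`, which exists because `g ^ p ^ e` lies in any
given open normal subgroup once `e` is large. For topological generators `s₁, …, s_d` of an abelian
pro-`p` group `G`, `(zᵢ) ↦ ∏ sᵢ ^ zᵢ` is then a continuous homomorphism `ℤ_[p]ᵈ → G` with compact,
hence closed, image containing the `sᵢ`, so it is surjective. A closed subgroup of `G` pulls back
to a closed subgroup of `ℤ_[p]ᵈ`, which is a `ℤ_[p]`-submodule because `ℤ` is dense in `ℤ_[p]`;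
ascending chains of those stabilize since `ℤ_[p]ᵈ` is a Noetherian module.
-/

open Filter Topology

section PadicModule

variable {p : ℕ} [Fact p.Prime] {M : Type*} [AddCommGroup M] [Module ℤ_[p] M] [TopologicalSpace M]

theorem AddSubgroup.padicInt_smul_mem_of_isClosed [ContinuousSMul ℤ_[p] M] {H : AddSubgroup M}
    (hH : IsClosed (H : Set M)) (c : ℤ_[p]) {x : M} (hx : x ∈ H) : c • x ∈ H := by
  have hclosed : IsClosed {c : ℤ_[p] | c • x ∈ H} :=
    hH.preimage (continuous_id.smul continuous_const)
  have hint : Set.range ((↑) : ℤ → ℤ_[p]) ⊆ {c : ℤ_[p] | c • x ∈ H} := by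
    rintro _ ⟨n, rfl⟩
    show (n : ℤ_[p]) • x ∈ H
    rw [Int.cast_smul_eq_zsmul]
    exact H.zsmul_mem hx n
  exact hclosed.closure_subset_iff.mpr hint (PadicInt.denseRange_intCast c)

theorem PadicInt.exists_forall_le_of_isClosed_addSubgroup [ContinuousSMul ℤ_[p] M]
    [IsNoetherian ℤ_[p] M] {F : ℕ → AddSubgroup M} (hF : Monotone F)
    (hFc : ∀ n, IsClosed (F n : Set M)) :
    ∃ n, ∀ m, F m ≤ F n := by
  let F' : ℕ →o Submodule ℤ_[p] M :=
    ⟨fun n => { (F n).toAddSubmonoid with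
      smul_mem' := fun c _ hx => (F n).padicInt_smul_mem_of_isClosed (hFc n) c hx }, hF⟩
  obtain ⟨n, hn⟩ := monotone_stabilizes_iff_noetherian.mpr inferInstance F'
  refine ⟨n, fun m => ?_⟩
  rcases le_total m n with h | h
  · exact hF h
  · exact (hn m h).ge

end PadicModule

theorem hasBasis_nhds_one_openNormalSubgroup {G : Type*} [Group G] [TopologicalSpace G]
    [IsTopologicalGroup G] [CompactSpace G] [TotallyDisconnectedSpace G] :
    (𝓝 (1 : G)).HasBasis (fun _ : OpenNormalSubgroup G => True) (↑) := by
  refine ⟨fun U => ⟨fun hU => ?_,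
    fun ⟨N, _, hN⟩ => mem_of_superset (N.isOpen.mem_nhds N.one_mem) hN⟩⟩
  obtain ⟨N, hN⟩ := ProfiniteGrp.exist_openNormalSubgroup_sub_open_nhds_of_one isOpen_interior
    (mem_interior_iff_mem_nhds.mpr hU)
  exact ⟨N, trivial, hN.trans interior_subset⟩

theorem Subgroup.exists_forall_pow_mem_of_isPGroup {G : Type*} [Group G] {p : ℕ} [Fact p.Prime]
    (N : Subgroup G) [N.Normal] [Finite (G ⧸ N)] (hN : IsPGroup p (G ⧸ N)) :
    ∃ e : ℕ, ∀ g : G, g ^ p ^ e ∈ N := by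
  obtain ⟨e, he⟩ := IsPGroup.iff_card.mp hN
  exact ⟨e, fun g => he ▸ N.pow_index_mem g⟩

theorem zpow_mem_of_norm_intCast_le {G : Type*} [Group G] {p : ℕ} [Fact p.Prime]
    {N : Subgroup G} {e : ℕ} (hN : ∀ g : G, g ^ p ^ e ∈ N) (g : G) {n : ℤ}
    (hn : ‖(n : ℤ_[p])‖ ≤ (p : ℝ) ^ (-e : ℤ)) :
    g ^ n ∈ N := by
  obtain ⟨t, rfl⟩ := PadicInt.norm_int_le_pow_iff_dvd.mp hn
  rw [zpow_mul]
  exact_mod_cast N.zpow_mem (hN g) t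

instance PadicInt.comap_intCast_nhds_neBot {p : ℕ} [Fact p.Prime] (z : ℤ_[p]) :
    (comap ((↑) : ℤ → ℤ_[p]) (𝓝 z)).NeBot :=
  comap_neBot fun _ ht =>
    let ⟨_, hxt, n, hn⟩ := mem_closure_iff_nhds.mp (PadicInt.denseRange_intCast z) _ ht
    ⟨n, hn ▸ hxt⟩

section PadicZPow

variable (p : ℕ) [Fact p.Prime] (G : Type*) [Group G] [TopologicalSpace G]

/-- For compact `G` this is equivalent to `G ⧸ N` being a `p`-group for every open normal `N`. -/
def HasPPowerExponentModOpen : Prop :=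
  ∀ N : OpenNormalSubgroup G, ∃ e : ℕ, ∀ g : G, g ^ p ^ e ∈ N

variable {G}

noncomputable def padicZPow (g : G) (z : ℤ_[p]) : G :=
  limUnder (comap ((↑) : ℤ → ℤ_[p]) (𝓝 z)) (g ^ · : ℤ → G)

variable {p} [IsTopologicalGroup G] [CompactSpace G] [TotallyDisconnectedSpace G]

theorem exists_tendsto_zpow_comap_intCast (hG : HasPPowerExponentModOpen p G) (g : G)
    (z : ℤ_[p]) :
    ∃ y, Tendsto (g ^ · : ℤ → G) (comap (↑) (𝓝 z)) (𝓝 y) := by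
  -- compact, hence complete, for its group uniformity
  let := IsTopologicalGroup.rightUniformSpace G
  refine CompleteSpace.complete
    ((IsUniformGroup.cauchy_map_iff_tendsto _ _).mpr ⟨inferInstance, ?_⟩)
  refine hasBasis_nhds_one_openNormalSubgroup.tendsto_right_iff.mpr fun N _ => ?_
  obtain ⟨e, he⟩ := hG N
  have hr : (0 : ℝ) < (p : ℝ) ^ (-e : ℤ) := zpow_pos (mod_cast (Fact.out : p.Prime).pos) _
  have hnear : ∀ᶠ n : ℤ in comap (↑) (𝓝 z), dist (n : ℤ_[p]) z ≤ (p : ℝ) ^ (-e : ℤ) :=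
    preimage_mem_comap (Metric.closedBall_mem_nhds z hr)
  filter_upwards [prod_mem_prod hnear hnear] with ⟨m, n⟩ ⟨hm, hn⟩
  rw [div_eq_mul_inv, ← zpow_sub]
  refine zpow_mem_of_norm_intCast_le he g ?_
  rw [Int.cast_sub, ← dist_eq_norm]
  exact (dist_triangle_max _ z _).trans (max_le hm (dist_comm (n : ℤ_[p]) z ▸ hn))

theorem tendsto_padicZPow (hG : HasPPowerExponentModOpen p G) (g : G) (z : ℤ_[p]) :
    Tendsto (g ^ · : ℤ → G) (comap (↑) (𝓝 z)) (𝓝 (padicZPow p g z)) :=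
  tendsto_nhds_limUnder (exists_tendsto_zpow_comap_intCast hG g z)

theorem padicZPow_mem_of_norm_le (hG : HasPPowerExponentModOpen p G) {N : Subgroup G}
    (hNc : IsClosed (N : Set G)) {e : ℕ} (hN : ∀ g : G, g ^ p ^ e ∈ N) (g : G) {z : ℤ_[p]}
    (hz : ‖z‖ ≤ (p : ℝ) ^ (-e : ℤ)) : padicZPow p g z ∈ N := by
  have hr : (0 : ℝ) < (p : ℝ) ^ (-e : ℤ) := zpow_pos (mod_cast (Fact.out : p.Prime).pos) _
  refine hNc.mem_of_tendsto (tendsto_padicZPow hG g z) ?_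
  filter_upwards [preimage_mem_comap (Metric.closedBall_mem_nhds z hr)] with n hn
  refine zpow_mem_of_norm_intCast_le hN g ?_
  rw [← dist_zero_right] at hz ⊢
  exact (dist_triangle_max _ z _).trans (max_le hn hz)

variable [T2Space G]

theorem padicZPow_intCast (hG : HasPPowerExponentModOpen p G) (g : G) (n : ℤ) :
    padicZPow p g n = g ^ n := by
  have hpure : pure n ≤ comap ((↑) : ℤ → ℤ_[p]) (𝓝 n) := map_le_iff_le_comap.mp (pure_le_nhds _)
  exact tendsto_nhds_unique ((tendsto_padicZPow hG g n).mono_left hpure) (tendsto_pure_nhds _ n)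

theorem padicZPow_add (hG : HasPPowerExponentModOpen p G) (g : G) (z w : ℤ_[p]) :
    padicZPow p g (z + w) = padicZPow p g z * padicZPow p g w := by
  have hsum : Tendsto (fun q : ℤ × ℤ => q.1 + q.2) (comap (↑) (𝓝 z) ×ˢ comap (↑) (𝓝 w))
      (comap ((↑) : ℤ → ℤ_[p]) (𝓝 (z + w))) := by
    refine tendsto_comap_iff.mpr ?_
    simp only [Function.comp_def, Int.cast_add]
    exact (tendsto_comap.comp tendsto_fst).add (tendsto_comap.comp tendsto_snd)
  refine tendsto_nhds_unique ((tendsto_padicZPow hG g _).comp hsum) ?_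
  simp only [Function.comp_def, zpow_add]
  exact ((tendsto_padicZPow hG g z).comp tendsto_fst).mul
    ((tendsto_padicZPow hG g w).comp tendsto_snd)

@[simps]
noncomputable def padicZPowHom (hG : HasPPowerExponentModOpen p G) (g : G) :
    ℤ_[p] →+ Additive G where
  toFun z := Additive.ofMul (padicZPow p g z)
  map_zero' := by simpa using congrArg Additive.ofMul (padicZPow_intCast hG g 0)
  map_add' := padicZPow_add hG g

theorem continuous_padicZPowHom (hG : HasPPowerExponentModOpen p G) (g : G) :
    Continuous (padicZPowHom hG g) := by
  refine continuous_of_continuousAt_zero _ ?_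
  rw [ContinuousAt, map_zero]
  refine (hasBasis_nhds_one_openNormalSubgroup (G := G)).tendsto_right_iff.mpr fun N _ => ?_
  obtain ⟨e, he⟩ := hG N
  have hr : (0 : ℝ) < (p : ℝ) ^ (-e : ℤ) := zpow_pos (mod_cast (Fact.out : p.Prime).pos) _
  filter_upwards [Metric.closedBall_mem_nhds (0 : ℤ_[p]) hr] with z hz
  rw [Metric.mem_closedBall, dist_zero_right] at hz
  exact padicZPow_mem_of_norm_le hG N.isClosed he g hz

end PadicZPow

section PadicZPowPi

variable {p : ℕ} [Fact p.Prime] {G : Type*} [CommGroup G] [TopologicalSpace G]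
  [IsTopologicalGroup G] [CompactSpace G] [TotallyDisconnectedSpace G] [T2Space G]
  {ι : Type*} [Fintype ι]

noncomputable def padicZPowPi (hG : HasPPowerExponentModOpen p G) (s : ι → G) :
    (ι → ℤ_[p]) →+ Additive G :=
  ∑ i, (padicZPowHom hG (s i)).comp (Pi.evalAddMonoidHom (fun _ => ℤ_[p]) i)

theorem padicZPowPi_apply (hG : HasPPowerExponentModOpen p G) (s : ι → G) (x : ι → ℤ_[p]) :
    padicZPowPi hG s x = ∑ i, padicZPowHom hG (s i) (x i) := by
  simp [padicZPowPi]

theorem continuous_padicZPowPi (hG : HasPPowerExponentModOpen p G) (s : ι → G) :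
    Continuous (padicZPowPi hG s) := by
  simp only [funext (padicZPowPi_apply hG s)]
  exact continuous_finsetSum _ fun i _ =>
    (continuous_padicZPowHom hG (s i)).comp (continuous_apply i)

theorem padicZPowPi_single [DecidableEq ι] (hG : HasPPowerExponentModOpen p G) (s : ι → G)
    (i : ι) :
    padicZPowPi hG s (Pi.single i 1) = Additive.ofMul (s i) := by
  rw [padicZPowPi_apply,
    Fintype.sum_eq_single i fun j hj => by rw [Pi.single_eq_of_ne hj, map_zero]]
  simpa using congrArg Additive.ofMul (padicZPow_intCast hG (s i) 1)

theorem padicZPowPi_surjective (hG : HasPPowerExponentModOpen p G) {s : ι → G}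
    (hs : Dense (Subgroup.closure (Set.range s) : Set G)) :
    Function.Surjective (padicZPowPi hG s) := by
  classical
  have hclosed : IsClosed (Set.range (padicZPowPi hG s)) :=
    (isCompact_range (continuous_padicZPowPi hG s)).isClosed
  have hgen :
      Subgroup.closure (Set.range s) ≤ AddSubgroup.toSubgroup' (padicZPowPi hG s).range := by
    rw [Subgroup.closure_le]
    rintro _ ⟨i, rfl⟩
    exact ⟨Pi.single i 1, padicZPowPi_single hG s i⟩
  exact fun y => hclosed.closure_subset_iff.mpr hgen (hs y)

end PadicZPowPi

/-- A topologically finitely generated abelian pro-`p` group is topologically Noetherian: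
every ascending chain of closed subgroups has a maximal element. -/
theorem topFG_abelian_pro_p_topologically_noetherian
    (p : ℕ) (hp : p.Prime) (G : Type*) [CommGroup G] [TopologicalSpace G]
    [IsTopologicalGroup G] [CompactSpace G] [TotallyDisconnectedSpace G] [T2Space G]
    (htfg : ∃ S : Finset G, Dense (Subgroup.closure (S : Set G) : Set G))
    (hpro_p : ∀ (N : Subgroup G) [N.Normal], IsOpen (N : Set G) → IsPGroup p (G ⧸ N)) :
    ∀ f : ℕ → Subgroup G, Monotone f → (∀ n : ℕ, IsClosed (f n : Set G)) →
      ∃ n : ℕ, ∀ m : ℕ, f m ≤ f n := by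
  intro f hf hfc
  have : Fact p.Prime := ⟨hp⟩
  obtain ⟨S, hS⟩ := htfg
  have hG : HasPPowerExponentModOpen p G := fun N =>
    have := N.toSubgroup.quotient_finite_of_isOpen N.isOpen
    N.toSubgroup.exists_forall_pow_mem_of_isPGroup (hpro_p N N.isOpen)
  let φ := padicZPowPi hG ((↑) : S → G)
  have hφ : Function.Surjective φ := padicZPowPi_surjective hG (by simpa using hS)
  obtain ⟨n, hn⟩ := PadicInt.exists_forall_le_of_isClosed_addSubgroup (p := p)
    (F := fun n => (Subgroup.toAddSubgroup (f n)).comap φ)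
    (fun a b hab => AddSubgroup.comap_mono (Subgroup.toAddSubgroup.monotone (hf hab)))
    (fun n => (hfc n).preimage (continuous_padicZPowPi hG _))
  exact ⟨n, fun m => (AddSubgroup.comap_le_comap_of_surjective hφ).mp (hn m)⟩
end

section
/- In the discrete Heisenberg group Γ with coordinates (a,b,c), for a prime p and ℓ > 0, the normal core in Γ of the subgroup Γ_ℓ = {(p^ℓ a, p^ℓ b, p^{2ℓ} c)} equals C_ℓ = {(p^{2ℓ} a, p^{2ℓ} b, p^{2ℓ} c) | a,b,c ∈ ℤ}, i.e., the largest normal subgroup of Γ contained in Γ_ℓ is C_ℓ. -/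
/-- The Heisenberg group over a commutative ring `R`, in coordinates: `(a, b, c)` stands for
the unipotent upper-triangular matrix `[[1, a, c], [0, 1, b], [0, 0, 1]]`. -/
@[ext]
structure Heis3 (R : Type) [CommRing R] where
  a : R
  b : R
  c : R

namespace Heis3

variable {R : Type} [CommRing R]

instance : Mul (Heis3 R) := ⟨fun x y => ⟨x.a + y.a, x.b + y.b, x.c + y.c + x.a * y.b⟩⟩
instance : One (Heis3 R) := ⟨⟨0, 0, 0⟩⟩
instance : Inv (Heis3 R) := ⟨fun x => ⟨-x.a, -x.b, -x.c + x.a * x.b⟩⟩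

@[simp] lemma mul_a (x y : Heis3 R) : (x * y).a = x.a + y.a := rfl
@[simp] lemma mul_b (x y : Heis3 R) : (x * y).b = x.b + y.b := rfl
@[simp] lemma mul_c (x y : Heis3 R) : (x * y).c = x.c + y.c + x.a * y.b := rfl
@[simp] lemma one_a : (1 : Heis3 R).a = 0 := rfl
@[simp] lemma one_b : (1 : Heis3 R).b = 0 := rfl
@[simp] lemma one_c : (1 : Heis3 R).c = 0 := rfl
@[simp] lemma inv_a (x : Heis3 R) : x⁻¹.a = -x.a := rfl
@[simp] lemma inv_b (x : Heis3 R) : x⁻¹.b = -x.b := rfl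
@[simp] lemma inv_c (x : Heis3 R) : x⁻¹.c = -x.c + x.a * x.b := rfl

instance : Group (Heis3 R) where
  mul_assoc x y z := by ext <;> simp <;> ring
  one_mul x := by ext <;> simp
  mul_one x := by ext <;> simp
  inv_mul_cancel x := by ext <;> simp

end Heis3

/-- In the discrete Heisenberg group, the normal core of
`Γ_ℓ = {(p^ℓ a, p^ℓ b, p^(2ℓ) c)}` equals `C_ℓ = {(p^(2ℓ) a, p^(2ℓ) b, p^(2ℓ) c)}`. -/
theorem heisenberg_normalCore_eq
    (p : ℕ) (hp : p.Prime) (ℓ : ℕ) (hℓ : 0 < ℓ)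
    (H C : Subgroup (Heis3 ℤ))
    (hH : ∀ x : Heis3 ℤ, x ∈ H ↔
      ((p : ℤ) ^ ℓ ∣ x.a ∧ (p : ℤ) ^ ℓ ∣ x.b ∧ (p : ℤ) ^ (2 * ℓ) ∣ x.c))
    (hC : ∀ x : Heis3 ℤ, x ∈ C ↔
      ((p : ℤ) ^ (2 * ℓ) ∣ x.a ∧ (p : ℤ) ^ (2 * ℓ) ∣ x.b ∧ (p : ℤ) ^ (2 * ℓ) ∣ x.c)) :
    H.normalCore = C := by

  have key : ∀ g x : Heis3 ℤ, g * x * g⁻¹ = ⟨x.a, x.b, x.c + g.a * x.b - g.b * x.a⟩ := by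
    intro g x
    ext <;> simp <;> ring
  ext x
  show (∀ g : Heis3 ℤ, g * x * g⁻¹ ∈ H) ↔ _
  rw [hC]
  constructor
  · intro h
    have h0 := (hH _).mp (h 1)
    rw [key] at h0
    simp at h0
    have h1 := (hH _).mp (h ⟨1, 0, 0⟩)
    rw [key] at h1
    simp at h1
    have h2 := (hH _).mp (h ⟨0, 1, 0⟩)
    rw [key] at h2
    simp at h2
    obtain ⟨-, -, hc⟩ := h0
    obtain ⟨-, -, hb⟩ := h1
    obtain ⟨-, -, ha⟩ := h2
    refine ⟨?_, ?_, hc⟩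
    · have := dvd_sub hc ha
      simpa using this
    · have := dvd_sub hb hc
      simpa using this
  · rintro ⟨ha, hb, hc⟩ g
    rw [key, hH]
    have hle : (p : ℤ) ^ ℓ ∣ (p : ℤ) ^ (2 * ℓ) := pow_dvd_pow _ (by omega)
    exact ⟨hle.trans ha, hle.trans hb,
      dvd_sub (dvd_add hc (Dvd.dvd.mul_left hb _)) (Dvd.dvd.mul_left ha _)⟩
end

section
/- For the finite Heisenberg group G_{p,n} of unipotent upper-triangular 3×3 matrices over ℤ/p^nℤ, the subgroup H_{p,n,k} = {(p^k ā, 0, 0) | ā ∈ ℤ/p^nℤ} has trivial core in G_{p,n}: the only element of G_{p,n} acting trivially on every coset of G_{p,n}/H_{p,n,k} is the identity. -/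
/-- In the finite Heisenberg group `G_{p,n}` over `ℤ/p^nℤ`, the subgroup
`H_{p,n,k} = {(p^k a, 0, 0)}` has trivial core: the only element acting trivially on every
coset of `G_{p,n}/H_{p,n,k}` is the identity. -/
theorem finite_heisenberg_trivial_core
    (p n k : ℕ) (hp : p.Prime) (hk : k < n)
    (H : Subgroup (Heis3 (ZMod (p ^ n))))
    (hH : ∀ y : Heis3 (ZMod (p ^ n)), y ∈ H ↔
      ∃ a : ZMod (p ^ n), y = ⟨(p : ZMod (p ^ n)) ^ k * a, 0, 0⟩) :
    ∀ g : Heis3 (ZMod (p ^ n)), (∀ x : Heis3 (ZMod (p ^ n)), x⁻¹ * g * x ∈ H) → g = 1 := by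
  intro g hg
  obtain ⟨a1, e1⟩ := (hH _).mp (hg 1)
  obtain ⟨a2, e2⟩ := (hH _).mp (hg ⟨0, 1, 0⟩)
  have hb : g.b = 0 := by have := congrArg Heis3.b e1; simpa using this
  have hc : g.c = 0 := by have := congrArg Heis3.c e1; simpa using this
  have ha : g.a = 0 := by
    have := congrArg Heis3.c e2
    simp [hc, hb] at this
    simpa using this
  ext <;> simp [ha, hb, hc]
end
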